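/- Let D ⊂ ℝ^{d+1} be a bounded domain with positive regularity R_D, and let q : D̄ → ℝ be l₀-Lipschitz with l₀ > 0. If the mean of |q| over D̄ is less than δ (i.e., ‖q‖_{L¹(D̄)} < δ |D|), then sup_D |q| ≤ max{ 2δ/R_D, 2 l₀ ( δ |D| Γ((d+1)/2+1) / (l₀ R_D π^{(d+1)/2}) )^{1/(d+2)} }. In particular, sup_D |q| → 0 as δ → 0. -/

import Mathlib

/-!
Let `M = |q x|` and `r = M / (2 l₀)`. By the Lipschitz bound, `|q| ≥ M / 2` on `B(x, r) ∩ D`, and by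
the definition of `R_D` this set has measure at least `R_D · min{|D|, ω_{d+1} r^{d+1}}`. Hence
`M / 2 · R_D · min{|D|, ω_{d+1} r^{d+1}} ≤ ‖q‖_{L¹} < δ |D|`. If the minimum is `|D|` this gives
`M < 2δ / R_D`; otherwise it gives `r^{d+2} < δ |D| / (l₀ R_D ω_{d+1})`, i.e. the second bound.
-/

open MeasureTheory Metric Set

theorem ciInf_div_mul_le {ι : Type*} {a b : ι → ℝ} (ha : ∀ i, 0 ≤ a i) (hb : ∀ i, 0 ≤ b i)
    (i : ι) : (⨅ j, a j / b j) * b i ≤ a i := by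
  rcases (hb i).eq_or_lt with hbi | hbi
  · simp [← hbi, ha i]
  · have hbdd : BddBelow (range fun j => a j / b j) :=
      ⟨0, by rintro _ ⟨j, rfl⟩; exact div_nonneg (ha j) (hb j)⟩
    calc (⨅ j, a j / b j) * b i ≤ a i / b i * b i :=
          mul_le_mul_of_nonneg_right (ciInf_le hbdd i) hbi.le
      _ = a i := div_mul_cancel₀ _ hbi.ne'

theorem LipschitzOnWith.half_abs_le_abs {α : Type*} [PseudoMetricSpace α] {K : NNReal}
    {f : α → ℝ} {s : Set α} (hf : LipschitzOnWith K f s) {x y : α} (hx : x ∈ s) (hy : y ∈ s)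
    (hxy : 2 * K * dist y x ≤ |f x|) : |f x| / 2 ≤ |f y| := by
  have hdist : |f y - f x| ≤ K * dist y x := hf.dist_le_mul y hy x hx
  have hrev : |f x| - |f y| ≤ |f y - f x| := abs_sub_comm (f x) (f y) ▸ abs_sub_abs_le_abs_sub _ _
  linarith

theorem mul_measureReal_le_setIntegral {α : Type*} [MeasurableSpace α] {μ : Measure α}
    {f : α → ℝ} {s t : Set α} {c : ℝ} (hs : MeasurableSet s) (hμs : μ s ≠ ⊤) (hst : s ⊆ t)
    (hf : IntegrableOn f t μ) (hf0 : 0 ≤ f) (hc : ∀ y ∈ s, c ≤ f y) :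
    c * μ.real s ≤ ∫ y in t, f y ∂μ :=
  calc c * μ.real s ≤ ∫ y in s, f y ∂μ := setIntegral_ge_of_const_le_real hs hμs hc (hf.mono_set hst)
    _ ≤ ∫ y in t, f y ∂μ :=
      setIntegral_mono_set hf (Filter.Eventually.of_forall hf0) hst.eventuallyLE

theorem le_max_of_half_mul_min_lt {n : ℕ} {M l R δ V c : ℝ} (hM : 0 < M) (hl : 0 < l)
    (hR : 0 < R) (hδ : 0 < δ) (hV : 0 < V) (hc : 0 < c)
    (h : M / 2 * (R * min V (c * (M / (2 * l)) ^ (n + 1))) < δ * V) :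
    M ≤ max (2 * δ / R) (2 * l * (δ * V / (l * R * c)) ^ ((1 : ℝ) / (n + 2))) := by
  set r := M / (2 * l) with hr
  have hM_eq : M = 2 * l * r := by rw [hr]; field_simp
  rcases min_cases V (c * r ^ (n + 1)) with ⟨hmin, -⟩ | ⟨hmin, -⟩
  · refine le_max_of_le_left ((le_div_iff₀ hR).2 ?_)
    rw [hmin] at h
    nlinarith
  · refine le_max_of_le_right ?_
    rw [hM_eq]
    refine mul_le_mul_of_nonneg_left ?_ (by positivity)
    rw [one_div, Real.le_rpow_inv_iff_of_pos (by positivity) (by positivity) (by positivity),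
      le_div_iff₀ (by positivity)]
    rw [hmin] at h
    have hpow : r ^ ((n : ℝ) + 2) = r ^ (n + 2) := by exact_mod_cast Real.rpow_natCast r (n + 2)
    rw [hpow]
    have : M / 2 * (R * (c * r ^ (n + 1))) = r ^ (n + 2) * (l * R * c) := by
      rw [hM_eq]; ring
    linarith

/-- If the mean of |q| over D̄ is less than δ, then the sup of |q| over D is bounded
by an explicit quantity tending to 0 with δ. -/
theorem stmt_1 {d : ℕ} (D : Set (EuclideanSpace ℝ (Fin (d + 1))))
    (hD : Bornology.IsBounded D) (hDopen : IsOpen D) (hDne : D.Nonempty)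
    (l₀ : ℝ) (hl₀ : 0 < l₀)
    (q : EuclideanSpace ℝ (Fin (d + 1)) → ℝ)
    (hq : LipschitzOnWith (Real.toNNReal l₀) q (closure D))
    (RD : ℝ)
    (hRD : RD = ⨅ p : D × {r : ℝ // 0 < r},
      (volume (closedBall (p.1 : EuclideanSpace ℝ (Fin (d + 1))) (p.2 : ℝ) ∩ D)).toReal /
        min (volume D).toReal
          (Real.pi ^ ((d + 1 : ℝ) / 2) * (p.2 : ℝ) ^ (d + 1) /
            Real.Gamma ((d + 1 : ℝ) / 2 + 1)))
    (hRDpos : 0 < RD)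
    (δ : ℝ) (hδ : 0 < δ)
    (hmean : (∫ y in closure D, |q y|) < δ * (volume D).toReal) :
    ∀ x ∈ D, |q x| ≤
      max (2 * δ / RD)
        (2 * l₀ *
          (δ * (volume D).toReal * Real.Gamma ((d + 1 : ℝ) / 2 + 1) /
              (l₀ * RD * Real.pi ^ ((d + 1 : ℝ) / 2))) ^ ((1 : ℝ) / (d + 2))) := by
  intro x hx
  rcases (abs_nonneg (q x)).eq_or_lt with hM0 | hMpos
  · exact hM0 ▸ le_max_of_le_left (by positivity)
  set M := |q x|
  set r := M / (2 * l₀)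
  set S := closedBall x r ∩ D
  have hΓ : 0 < Real.Gamma ((d + 1 : ℝ) / 2 + 1) := Real.Gamma_pos_of_pos (by positivity)
  have hvD : 0 < (volume D).toReal :=
    ENNReal.toReal_pos (hDopen.measure_pos volume hDne).ne' hD.measure_lt_top.ne
  have hS : RD * min (volume D).toReal
      (Real.pi ^ ((d + 1 : ℝ) / 2) * r ^ (d + 1) / Real.Gamma ((d + 1 : ℝ) / 2 + 1)) ≤
      volume.real S := by
    rw [hRD]
    refine ciInf_div_mul_le (fun _ => ENNReal.toReal_nonneg) (fun p => ?_)
      (⟨⟨x, hx⟩, ⟨r, by positivity⟩⟩ : D × {r : ℝ // 0 < r})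
    have := p.2.2
    positivity
  have hlarge : ∀ y ∈ S, M / 2 ≤ |q y| := fun y hy =>
    hq.half_abs_le_abs (subset_closure hx) (subset_closure hy.2) <| by
      rw [Real.coe_toNNReal l₀ hl₀.le, ← le_div_iff₀' (by positivity)]
      exact hy.1
  have hint : M / 2 * volume.real S ≤ ∫ y in closure D, |q y| :=
    mul_measureReal_le_setIntegral (measurableSet_closedBall.inter hDopen.measurableSet)
      (measure_ne_top_of_subset inter_subset_right hD.measure_lt_top.ne)
      (inter_subset_right.trans subset_closure)
      (hq.continuousOn.abs.integrableOn_compact hD.isCompact_closure) (fun _ => abs_nonneg _)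
      hlarge
  have key := le_max_of_half_mul_min_lt (n := d)
    (c := Real.pi ^ ((d + 1 : ℝ) / 2) / Real.Gamma ((d + 1 : ℝ) / 2 + 1)) hMpos hl₀ hRDpos hδ hvD
    (div_pos (Real.rpow_pos_of_pos Real.pi_pos _) hΓ) <| by
      calc _ = M / 2 * (RD * min (volume D).toReal
            (Real.pi ^ ((d + 1 : ℝ) / 2) * r ^ (d + 1) / Real.Gamma ((d + 1 : ℝ) / 2 + 1))) := by
            rw [div_mul_eq_mul_div (Real.pi ^ _)]
        _ ≤ M / 2 * volume.real S := mul_le_mul_of_nonneg_left hS (by positivity)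
        _ < _ := hint.trans_lt hmean
  convert key using 4
  field_simp
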